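/- arXiv:hep-th/0610224 — 3 statements merged into one kernel-verified Lean document; each statement's English description precedes it below -/
import Mathlib

section
/- Let a, b be real numbers with b ≠ 0, and let lambda, Omega : R -> R be differentiable functions satisfying lambda'(t) = a (1 - Omega(t)) lambda(t)^2 and Omega'(t) = b (1 - Omega(t)) lambda(t) for all t. Then the function t -> lambda(t) * exp(-(a/b) * Omega(t)) is constant; in particular lambda(t) = lambda(0) * exp((a/b)(Omega(t) - Omega(0))) for all t. -/
/-! Both right-hand sides carry the factor `(1 - Ω) λ`, so `λ' = (a / b) Ω' λ`. For any
`f' = c g' f` the product rule makes `f · exp (-c g)` stationary, hence constant. -/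

open Real

theorem hasDerivAt_mul_exp_neg_mul_eq_zero {f g : ℝ → ℝ} {c f' g' x : ℝ}
    (hf : HasDerivAt f f' x) (hg : HasDerivAt g g' x) (hfg : f' = c * g' * f x) :
    HasDerivAt (fun t => f t * exp (-c * g t)) 0 x := by
  refine (hf.mul (hg.const_mul (-c)).exp).congr_deriv ?_
  rw [hfg]
  ring

theorem mul_exp_neg_mul_eq_of_deriv_eq {f g : ℝ → ℝ} {c : ℝ}
    (hf : Differentiable ℝ f) (hg : Differentiable ℝ g)
    (hfg : ∀ t, deriv f t = c * deriv g t * f t) (t s : ℝ) :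
    f t * exp (-c * g t) = f s * exp (-c * g s) := by
  have hderiv : ∀ x, HasDerivAt (fun t => f t * exp (-c * g t)) 0 x := fun x =>
    hasDerivAt_mul_exp_neg_mul_eq_zero (hf x).hasDerivAt (hg x).hasDerivAt (hfg x)
  exact is_const_of_deriv_eq_zero (fun x => (hderiv x).differentiableAt)
    (fun x => (hderiv x).deriv) t s

theorem eq_mul_exp_mul_sub_of_deriv_eq {f g : ℝ → ℝ} {c : ℝ}
    (hf : Differentiable ℝ f) (hg : Differentiable ℝ g)
    (hfg : ∀ t, deriv f t = c * deriv g t * f t) (t s : ℝ) :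
    f t = f s * exp (c * (g t - g s)) :=
  calc f t = f t * exp (-c * g t) * exp (c * g t) := by
        rw [mul_assoc, ← exp_add, neg_mul, neg_add_cancel, exp_zero, mul_one]
    _ = f s * exp (-c * g s) * exp (c * g t) := by
        rw [mul_exp_neg_mul_eq_of_deriv_eq hf hg hfg t s]
    _ = f s * exp (c * (g t - g s)) := by
        rw [mul_assoc, ← exp_add]
        ring_nf

theorem stmt_8 (a b : ℝ) (hb : b ≠ 0) (lam Omega : ℝ → ℝ)
    (hlam : Differentiable ℝ lam) (hOmega : Differentiable ℝ Omega)
    (hl : ∀ t, deriv lam t = a * (1 - Omega t) * (lam t)^2)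
    (hO : ∀ t, deriv Omega t = b * (1 - Omega t) * lam t) :
    (∀ t, lam t * Real.exp (-(a / b) * Omega t)
        = lam 0 * Real.exp (-(a / b) * Omega 0))
    ∧ ∀ t, lam t = lam 0 * Real.exp ((a / b) * (Omega t - Omega 0)) := by
  have hflow : ∀ t, deriv lam t = a / b * deriv Omega t * lam t := fun t => by
    rw [hl, hO]
    field_simp
  exact ⟨fun t => mul_exp_neg_mul_eq_of_deriv_eq hlam hOmega hflow t 0,
    fun t => eq_mul_exp_mul_sub_of_deriv_eq hlam hOmega hflow t 0⟩
end

section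
/- For every real A > 0, the triple series over p, q, r in the natural numbers with terms (p+1)(q+1)(r+1) * q / ((A+p)^2 (A+q) (A+p+q)^2 (A+r)^2 (A+q+r)) is summable. -/
lemma shifted_rpow_summable (e : ℝ) (he : e < -1) :
    Summable (fun n : ℕ => ((n : ℝ) + 1) ^ e) := by
  have h0 : Summable (fun n : ℕ => (n : ℝ) ^ e) := Real.summable_nat_rpow.mpr he
  have h1 := (summable_nat_add_iff (f := fun n : ℕ => (n : ℝ) ^ e) 1).mpr h0
  refine h1.congr fun n => ?_
  push_cast
  ring_nf

lemma aux2 (m a : ℝ) (hm : 0 < m) (k : ℕ) (ha : (k : ℝ) + 1 < a) :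
    Summable (fun n : ℕ => ((n : ℝ) + 1) ^ k / (m * ((n : ℝ) + 1)) ^ a) := by
  have hs := (shifted_rpow_summable ((k : ℝ) - a) (by linarith)).mul_left ((m ^ a)⁻¹)
  refine hs.congr fun n => ?_
  have hx : (0 : ℝ) < (n : ℝ) + 1 := by positivity
  rw [Real.mul_rpow hm.le hx.le, Real.rpow_sub hx, Real.rpow_natCast]
  have h1 : (m : ℝ) ^ a ≠ 0 := (Real.rpow_pos_of_pos hm a).ne'
  have h2 : ((n : ℝ) + 1) ^ a ≠ 0 := (Real.rpow_pos_of_pos hx a).ne'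
  field_simp

set_option maxHeartbeats 1600000 in
theorem stmt_14 (A : ℝ) (hA : 0 < A) :
    Summable (fun x : ℕ × ℕ × ℕ =>
      ((x.1 + 1) * (x.2.1 + 1) * (x.2.2 + 1) * x.2.1 : ℝ) /
        ((A + x.1)^2 * (A + x.2.1) * (A + x.1 + x.2.1)^2
          * (A + x.2.2)^2 * (A + x.2.1 + x.2.2))) := by
  set m : ℝ := min A 1 with hmdef
  have hm : 0 < m := lt_min hA one_pos
  have hkey : ∀ n : ℕ, m * ((n : ℝ) + 1) ≤ A + n := by
    intro n
    have h1 : m ≤ A := min_le_left A 1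
    have h2 : m ≤ 1 := min_le_right A 1
    have h3 : (0 : ℝ) ≤ n := n.cast_nonneg
    nlinarith
  have hf : Summable (fun n : ℕ => ((n : ℝ) + 1) ^ (1 : ℕ) / (m * ((n : ℝ) + 1)) ^ ((9 : ℝ)/4)) :=
    aux2 m _ hm 1 (by norm_num)
  have hg : Summable (fun n : ℕ => ((n : ℝ) + 1) ^ (2 : ℕ) / (m * ((n : ℝ) + 1)) ^ ((13 : ℝ)/4)) :=
    aux2 m _ hm 2 (by norm_num)
  have hh : Summable (fun n : ℕ => ((n : ℝ) + 1) ^ (1 : ℕ) / (m * ((n : ℝ) + 1)) ^ ((5 : ℝ)/2)) :=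
    aux2 m _ hm 1 (by norm_num)
  have hgh : Summable (fun y : ℕ × ℕ =>
      (((y.1 : ℝ) + 1) ^ (2 : ℕ) / (m * ((y.1 : ℝ) + 1)) ^ ((13 : ℝ)/4)) *
      (((y.2 : ℝ) + 1) ^ (1 : ℕ) / (m * ((y.2 : ℝ) + 1)) ^ ((5 : ℝ)/2))) :=
    hg.mul_of_nonneg hh (fun n => by positivity) (fun n => by positivity)
  have hfgh : Summable (fun x : ℕ × ℕ × ℕ =>
      (((x.1 : ℝ) + 1) ^ (1 : ℕ) / (m * ((x.1 : ℝ) + 1)) ^ ((9 : ℝ)/4)) *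
      ((((x.2.1 : ℝ) + 1) ^ (2 : ℕ) / (m * ((x.2.1 : ℝ) + 1)) ^ ((13 : ℝ)/4)) *
       (((x.2.2 : ℝ) + 1) ^ (1 : ℕ) / (m * ((x.2.2 : ℝ) + 1)) ^ ((5 : ℝ)/2)))) :=
    hf.mul_of_nonneg hgh (fun n => by positivity) (fun y => by positivity)
  refine Summable.of_nonneg_of_le (fun x => by positivity) ?_ hfgh
  rintro ⟨p, q, r⟩
  dsimp only
  have hxp : (0 : ℝ) < m * ((p : ℝ) + 1) := by positivity
  have hxq : (0 : ℝ) < m * ((q : ℝ) + 1) := by positivity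
  have hxr : (0 : ℝ) < m * ((r : ℝ) + 1) := by positivity
  have hp := hkey p
  have hq := hkey q
  have hr := hkey r
  have hQ0 : (0 : ℝ) ≤ (q : ℝ) := q.cast_nonneg
  have hP0 : (0 : ℝ) ≤ (p : ℝ) := p.cast_nonneg
  have hR0 : (0 : ℝ) ≤ (r : ℝ) := r.cast_nonneg
  have hpq : m * ((p : ℝ) + 1) ≤ A + p + q := le_trans hp (by linarith)
  have hpq' : m * ((q : ℝ) + 1) ≤ A + p + q := le_trans hq (by linarith)
  have hqr : m * ((q : ℝ) + 1) ≤ A + q + r := le_trans hq (by linarith)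
  have hqr' : m * ((r : ℝ) + 1) ≤ A + q + r := le_trans hr (by linarith)
  have hApq : (0 : ℝ) < A + p + q := by positivity
  have hAqr : (0 : ℝ) < A + q + r := by positivity
  -- splitting identities
  have e1 : (m * ((p : ℝ) + 1)) ^ ((9 : ℝ)/4)
      = (m * ((p : ℝ) + 1)) ^ 2 * (m * ((p : ℝ) + 1)) ^ ((1 : ℝ)/4) := by
    rw [← Real.rpow_natCast (m * ((p : ℝ) + 1)) 2, ← Real.rpow_add hxp]
    norm_num
  have e2 : (m * ((q : ℝ) + 1)) ^ ((13 : ℝ)/4)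
      = m * ((q : ℝ) + 1) * ((m * ((q : ℝ) + 1)) ^ ((7 : ℝ)/4) * (m * ((q : ℝ) + 1)) ^ ((1 : ℝ)/2)) := by
    have h : (m * ((q : ℝ) + 1)) ^ ((13 : ℝ)/4)
        = (m * ((q : ℝ) + 1)) ^ (1 : ℝ) *
          ((m * ((q : ℝ) + 1)) ^ ((7 : ℝ)/4) * (m * ((q : ℝ) + 1)) ^ ((1 : ℝ)/2)) := by
      rw [← Real.rpow_add hxq, ← Real.rpow_add hxq]; norm_num
    simpa [Real.rpow_one] using h
  have e3 : (m * ((r : ℝ) + 1)) ^ ((5 : ℝ)/2)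
      = (m * ((r : ℝ) + 1)) ^ 2 * (m * ((r : ℝ) + 1)) ^ ((1 : ℝ)/2) := by
    rw [← Real.rpow_natCast (m * ((r : ℝ) + 1)) 2, ← Real.rpow_add hxr]
    norm_num
  have E2 : (A + (p : ℝ) + q) ^ 2
      = (A + (p : ℝ) + q) ^ ((1 : ℝ)/4) * (A + (p : ℝ) + q) ^ ((7 : ℝ)/4) := by
    rw [← Real.rpow_add hApq, ← Real.rpow_natCast (A + (p : ℝ) + q) 2]
    norm_num
  have E3 : (A + (q : ℝ) + r)
      = (A + (q : ℝ) + r) ^ ((1 : ℝ)/2) * (A + (q : ℝ) + r) ^ ((1 : ℝ)/2) := by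
    rw [← Real.rpow_add hAqr]
    norm_num
  have hD : (m * ((p : ℝ) + 1)) ^ ((9 : ℝ)/4) *
        ((m * ((q : ℝ) + 1)) ^ ((13 : ℝ)/4) * (m * ((r : ℝ) + 1)) ^ ((5 : ℝ)/2))
      ≤ (A + (p : ℝ))^2 * (A + (q : ℝ)) * (A + (p : ℝ) + q)^2
          * (A + (r : ℝ))^2 * (A + (q : ℝ) + r) := by
    calc (m * ((p : ℝ) + 1)) ^ ((9 : ℝ)/4) *
        ((m * ((q : ℝ) + 1)) ^ ((13 : ℝ)/4) * (m * ((r : ℝ) + 1)) ^ ((5 : ℝ)/2))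
        = (m * ((p : ℝ) + 1)) ^ 2 * (m * ((q : ℝ) + 1)) *
            ((m * ((p : ℝ) + 1)) ^ ((1 : ℝ)/4) * (m * ((q : ℝ) + 1)) ^ ((7 : ℝ)/4)) *
            (m * ((r : ℝ) + 1)) ^ 2 *
            ((m * ((q : ℝ) + 1)) ^ ((1 : ℝ)/2) * (m * ((r : ℝ) + 1)) ^ ((1 : ℝ)/2)) := by
          rw [e1, e2, e3]; ring
      _ ≤ (A + (p : ℝ))^2 * (A + (q : ℝ)) *
            ((A + (p : ℝ) + q) ^ ((1 : ℝ)/4) * (A + (p : ℝ) + q) ^ ((7 : ℝ)/4)) *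
            (A + (r : ℝ))^2 *
            ((A + (q : ℝ) + r) ^ ((1 : ℝ)/2) * (A + (q : ℝ) + r) ^ ((1 : ℝ)/2)) := by
          gcongr <;> first | exact hxp.le | exact hxq.le | exact hxr.le | assumption
      _ = (A + (p : ℝ))^2 * (A + (q : ℝ)) * (A + (p : ℝ) + q)^2
            * (A + (r : ℝ))^2 * (A + (q : ℝ) + r) := by
          rw [← E2, ← E3]
  have hN : ((p : ℝ) + 1) * ((q : ℝ) + 1) * ((r : ℝ) + 1) * q
      ≤ ((p : ℝ) + 1) ^ (1 : ℕ) * (((q : ℝ) + 1) ^ (2 : ℕ) * ((r : ℝ) + 1) ^ (1 : ℕ)) := by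
    nlinarith [mul_nonneg (mul_nonneg (by linarith : (0:ℝ) ≤ (p:ℝ)+1) (by linarith : (0:ℝ) ≤ (q:ℝ)+1)) (by linarith : (0:ℝ) ≤ (r:ℝ)+1)]
  calc ((p : ℝ) + 1) * ((q : ℝ) + 1) * ((r : ℝ) + 1) * q /
        ((A + (p : ℝ))^2 * (A + (q : ℝ)) * (A + (p : ℝ) + q)^2
          * (A + (r : ℝ))^2 * (A + (q : ℝ) + r))
      ≤ (((p : ℝ) + 1) ^ (1 : ℕ) * (((q : ℝ) + 1) ^ (2 : ℕ) * ((r : ℝ) + 1) ^ (1 : ℕ))) /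
        ((m * ((p : ℝ) + 1)) ^ ((9 : ℝ)/4) *
          ((m * ((q : ℝ) + 1)) ^ ((13 : ℝ)/4) * (m * ((r : ℝ) + 1)) ^ ((5 : ℝ)/2))) := by
        apply div_le_div₀ (by positivity) hN (by positivity) hD
    _ = (((p : ℝ) + 1) ^ (1 : ℕ) / (m * ((p : ℝ) + 1)) ^ ((9 : ℝ)/4)) *
        ((((q : ℝ) + 1) ^ (2 : ℕ) / (m * ((q : ℝ) + 1)) ^ ((13 : ℝ)/4)) *
         (((r : ℝ) + 1) ^ (1 : ℕ) / (m * ((r : ℝ) + 1)) ^ ((5 : ℝ)/2))) := by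
        rw [div_mul_div_comm, div_mul_div_comm]
end

section
/- For every real A > 0 and every natural number N, define a_N = (1/4) * S1, a'_N = (1/2) * S1, b_N = (1/16) * (T1 + T2 + 2*(T3 + T4)) and b'_N = (1/8) * (T1 + 2*(T2 + T3 + T4)), where S1 = sum_{p ≤ N} 1/(A+p)^2, T1 = sum_{p,q ≤ N} 1/((A+p)^2 (A+q)^2), T2 = sum_{p,q ≤ N} 1/((A+p)^2 (A+q)(A+p+q)), T3 = sum_{p,q ≤ N} 1/((A+p)^3 (A+q)), T4 = sum_{p,q ≤ N} 1/((A+p)^3 (A+p+q)). Then a'_N = 2 a_N and b'_N - 2 b_N - a_N^2 = (A/16) * sum_{p,q ≤ N} 1/((A+p)^2 (A+q)^2 (A+p+q)). -/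
/-!
Writing `x = A + p`, `y = A + q`, the difference `b' - 2 b - a²` equals `(2 T₂ - T₁) / 16`
because `a² = T₁ / 16`. Symmetrising `T₂` in `p ↔ q` pairs `1 / (x² y (x + y - A))` with
`1 / (y² x (x + y - A))`, whose sum is `(x + y) / (x² y² (x + y - A))`; splitting
`x + y = (x + y - A) + A` gives `2 T₂ = T₁ + A · ∑ 1 / (x² y² (x + y - A))`.
-/

theorem Finset.two_mul_sum_sum_eq_sum_sum_add_swap {ι R : Type*} [NonAssocSemiring R]
    (s : Finset ι) (g : ι → ι → R) :
    2 * ∑ p ∈ s, ∑ q ∈ s, g p q = ∑ p ∈ s, ∑ q ∈ s, (g p q + g q p) := by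
  rw [two_mul]
  nth_rewrite 2 [Finset.sum_comm]
  simp only [← Finset.sum_add_distrib]

theorem one_div_sq_mul_mul_add_swap {K : Type*} [Field K] {x y w : K}
    (hx : x ≠ 0) (hy : y ≠ 0) (hw : w ≠ 0) :
    1 / (x ^ 2 * y * w) + 1 / (y ^ 2 * x * w) =
      1 / (x ^ 2 * y ^ 2) + (x + y - w) / (x ^ 2 * y ^ 2 * w) := by
  field_simp
  ring

theorem two_mul_sum_sum_sub_sum_sum_sq_mul_sq {A : ℝ} (hA : 0 < A) (s : Finset ℕ) :
    2 * ∑ p ∈ s, ∑ q ∈ s, 1 / ((A + p) ^ 2 * (A + q) * (A + p + q))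
      - ∑ p ∈ s, ∑ q ∈ s, 1 / ((A + p) ^ 2 * (A + q) ^ 2) =
      A * ∑ p ∈ s, ∑ q ∈ s, 1 / ((A + p) ^ 2 * (A + q) ^ 2 * (A + p + q)) := by
  have hpos (n : ℕ) : (0 : ℝ) < A + n := by positivity
  have hpair (p q : ℕ) :
      1 / ((A + p) ^ 2 * (A + q) * (A + p + q)) + 1 / ((A + q) ^ 2 * (A + p) * (A + q + p)) =
        1 / ((A + p) ^ 2 * (A + q) ^ 2) + A / ((A + p) ^ 2 * (A + q) ^ 2 * (A + p + q)) := by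
    rw [add_right_comm A (q : ℝ), one_div_sq_mul_mul_add_swap (hpos p).ne' (hpos q).ne'
      (by positivity)]
    ring_nf
  rw [Finset.two_mul_sum_sum_eq_sum_sum_add_swap, sub_eq_iff_eq_add', Finset.mul_sum]
  simp only [hpair, Finset.mul_sum, Finset.sum_add_distrib, mul_one_div]

theorem stmt_15 (A : ℝ) (hA : 0 < A) (N : ℕ) :
    let S1 := ∑ p ∈ Finset.range (N + 1), 1 / (A + p)^2
    let T1 := ∑ p ∈ Finset.range (N + 1), ∑ q ∈ Finset.range (N + 1),
      1 / ((A + p)^2 * (A + q)^2)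
    let T2 := ∑ p ∈ Finset.range (N + 1), ∑ q ∈ Finset.range (N + 1),
      1 / ((A + p)^2 * (A + q) * (A + p + q))
    let T3 := ∑ p ∈ Finset.range (N + 1), ∑ q ∈ Finset.range (N + 1),
      1 / ((A + p)^3 * (A + q))
    let T4 := ∑ p ∈ Finset.range (N + 1), ∑ q ∈ Finset.range (N + 1),
      1 / ((A + p)^3 * (A + p + q))
    let a := (1 / 4) * S1
    let a' := (1 / 2) * S1
    let b := (1 / 16) * (T1 + T2 + 2 * (T3 + T4))
    let b' := (1 / 8) * (T1 + 2 * (T2 + T3 + T4))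
    a' = 2 * a ∧
    b' - 2 * b - a^2 = (A / 16) * ∑ p ∈ Finset.range (N + 1), ∑ q ∈ Finset.range (N + 1),
      1 / ((A + p)^2 * (A + q)^2 * (A + p + q)) := by
  intro S1 T1 T2 T3 T4 a a' b b'
  have hT1 : T1 = S1 ^ 2 := by
    simp only [T1, S1, sq, Finset.sum_mul_sum, one_div_mul_one_div]
  have hsymm := two_mul_sum_sum_sub_sum_sum_sq_mul_sq hA (Finset.range (N + 1))
  refine ⟨by ring, ?_⟩
  change 2 * T2 - T1 = _ at hsymm
  simp only [b', b, a, hT1] at hsymm ⊢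
  linear_combination hsymm / 16
end
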